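/- arXiv:2605.15416 — 3 statements merged into one kernel-verified Lean document; each statement's English description precedes it below -/
import Mathlib

section
/- Let D be a probability measure on X × Y, f : X → Y a measurable judge, and C : X → ℝ a measurable confidence function, and fix δ ∈ (0,1), α ∈ (0,1). For λ ∈ ℝ with D({(x,y) : C(x) ≥ λ}) > 0, define the selective risk R(λ) = D(f(x) ≠ y | C(x) ≥ λ). Draw m i.i.d. calibration samples (x_1, y_1), …, (x_m, y_m) from D; let S_λ = {i : C(x_i) ≥ λ}, let R̂(λ) be the fraction of i ∈ S_λ with f(x_i) ≠ y_i, and let R̂⁺(λ) = sup{ R ∈ [0,1] : P( Binomial(|S_λ|, R) ≤ ⌈|S_λ| R̂(λ)⌉ ) ≥ δ }. Fix a finite decreasing grid Λ = {λ_1 > λ_2 > ⋯ > λ_T} and define λ̂ = min{ λ ∈ Λ : R̂⁺(λ') ≤ α for all λ' ∈ Λ with λ' ≥ λ } whenever this set is nonempty. Then, with probability at least 1 − δ over the calibration sample, either no threshold is selected or D( f(x) = y | C(x) ≥ λ̂ ) ≥ 1 − α. -/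
/-!
Let `λ*` be the largest grid point at which the conditional agreement is below `1 - α`. A
selected `λ̂` violating the target satisfies `λ̂ ≤ λ*`, so the test at `λ*` passed, i.e.
`R̂⁺(λ*) ≤ α < R(λ*)`. Given the `N` selected calibration points, the number `K` of
disagreements among them is `Binomial(N, R(λ*))`, and `R(λ*) > R̂⁺(λ*)` forces
`P(Binomial(N, R(λ*)) ≤ K) < δ`. For any distribution function `F` of an integer variable `K`,
`P(F(K) < δ) ≤ δ`; hence the failure event has probability at most `δ`.
-/

open MeasureTheory ProbabilityTheory
open scoped ENNReal NNReal

/-- `binCDF n r k = P(Binomial(n, r) ≤ k) = ∑_{j=0}^k C(n,j) r^j (1-r)^{n-j}`. -/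
noncomputable def binCDF (n : ℕ) (r : ℝ) (k : ℕ) : ℝ :=
  ∑ j ∈ Finset.range (k + 1), (n.choose j : ℝ) * r ^ j * (1 - r) ^ (n - j)

/-- Number of calibration points with confidence at least `lam`. -/
noncomputable def nSel {X Y : Type*} (C : X → ℝ) (m : ℕ) (ω : Fin m → X × Y)
    (lam : ℝ) : ℕ :=
  Set.ncard {i : Fin m | lam ≤ C (ω i).1}

/-- Empirical selective disagreement risk `R̂(lam)`. -/
noncomputable def Rhat {X Y : Type*} (f : X → Y) (C : X → ℝ) (m : ℕ)
    (ω : Fin m → X × Y) (lam : ℝ) : ℝ :=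
  (Set.ncard {i : Fin m | lam ≤ C (ω i).1 ∧ f (ω i).1 ≠ (ω i).2} : ℝ) /
    (nSel C m ω lam : ℝ)

/-- Exact binomial upper confidence bound `R̂⁺(lam)`. -/
noncomputable def RhatPlus {X Y : Type*} (f : X → Y) (C : X → ℝ) (δ : ℝ) (m : ℕ)
    (ω : Fin m → X × Y) (lam : ℝ) : ℝ :=
  sSup {R : ℝ | R ∈ Set.Icc (0 : ℝ) 1 ∧
    δ ≤ binCDF (nSel C m ω lam) R ⌈(nSel C m ω lam : ℝ) * Rhat f C m ω lam⌉₊}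

open Finset

theorem sum_filter_partialSum_lt_le (w : ℕ → ℝ) (hw : ∀ j, 0 ≤ w j) (N : ℕ) {δ : ℝ}
    (hδ : 0 ≤ δ) : ∑ k ∈ range N with ∑ j ∈ range (k + 1), w j < δ, w k ≤ δ := by
  set bad := {k ∈ range N | ∑ j ∈ range (k + 1), w j < δ}
  rcases bad.eq_empty_or_nonempty with hbad | hbad
  · simpa [hbad] using hδ
  -- every `k ∈ bad` lies below the largest one, whose partial sum is already `< δ`
  have hlast := (mem_filter.1 (bad.max'_mem hbad)).2
  calc ∑ k ∈ bad, w k ≤ ∑ j ∈ range (bad.max' hbad + 1), w j :=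
        sum_le_sum_of_subset_of_nonneg
          (fun k hk => mem_range.2 (Nat.lt_succ_of_le (bad.le_max' k hk))) fun j _ _ => hw j
    _ ≤ δ := hlast.le

theorem binCDF_term_nonneg (n : ℕ) {p : ℝ} (hp0 : 0 ≤ p) (hp1 : p ≤ 1) (j : ℕ) :
    0 ≤ (n.choose j : ℝ) * p ^ j * (1 - p) ^ (n - j) := by
  have : 0 ≤ 1 - p := by linarith
  positivity

theorem binCDF_monotone (n : ℕ) {p : ℝ} (hp0 : 0 ≤ p) (hp1 : p ≤ 1) :
    Monotone (binCDF n p) := fun _ _ hk =>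
  sum_le_sum_of_subset_of_nonneg (range_subset_range.2 (by omega))
    fun j _ _ => binCDF_term_nonneg n hp0 hp1 j

theorem sum_powerset_filter_binCDF_lt_le {ι : Type*} (s : Finset ι) {p q δ : ℝ}
    (hp0 : 0 ≤ p) (hp1 : p ≤ 1) (hq0 : 0 ≤ q) (hq1 : q ≤ 1) (hδ : 0 ≤ δ) :
    ∑ T ∈ s.powerset, ∑ U ∈ T.powerset with binCDF #T p #U < δ,
      (p * q) ^ #U * ((1 - p) * q) ^ (#T - #U) * (1 - q) ^ (#s - #T) ≤ δ := by
  have inner : ∀ T ∈ s.powerset, ∑ U ∈ T.powerset with binCDF #T p #U < δ,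
      (p * q) ^ #U * ((1 - p) * q) ^ (#T - #U) * (1 - q) ^ (#s - #T) ≤
        δ * (q ^ #T * (1 - q) ^ (#s - #T)) := by
    intro T _
    rw [sum_filter, sum_powerset_apply_card (fun k => if binCDF #T p k < δ then
      (p * q) ^ k * ((1 - p) * q) ^ (#T - k) * (1 - q) ^ (#s - #T) else 0)]
    simp only [smul_ite, smul_zero]
    rw [← sum_filter]
    calc ∑ k ∈ range (#T + 1) with binCDF #T p k < δ,
          (#T).choose k • ((p * q) ^ k * ((1 - p) * q) ^ (#T - k) * (1 - q) ^ (#s - #T))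
        = (∑ k ∈ range (#T + 1) with binCDF #T p k < δ,
            ((#T).choose k : ℝ) * p ^ k * (1 - p) ^ (#T - k)) *
              (q ^ #T * (1 - q) ^ (#s - #T)) := by
          rw [sum_mul]
          refine sum_congr rfl fun k hk => ?_
          have hqT : q ^ #T = q ^ k * q ^ (#T - k) := by
            rw [← pow_add, Nat.add_sub_cancel' (Nat.lt_succ_iff.1 (mem_range.1 (mem_filter.1 hk).1))]
          rw [nsmul_eq_mul, hqT, mul_pow, mul_pow]
          ring
      _ ≤ δ * (q ^ #T * (1 - q) ^ (#s - #T)) :=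
          mul_le_mul_of_nonneg_right
            (sum_filter_partialSum_lt_le _ (binCDF_term_nonneg _ hp0 hp1) _ hδ)
            (by have : 0 ≤ 1 - q := by linarith
                positivity)
  calc _ ≤ ∑ T ∈ s.powerset, δ * (q ^ #T * (1 - q) ^ (#s - #T)) := sum_le_sum inner
    _ = δ := by rw [← mul_sum, sum_pow_mul_eq_add_pow, add_sub_cancel, one_pow, mul_one]

section SampleCounts

variable {Z : Type*} {m : ℕ}

theorem setOf_samples_eq_pi {S A : Set Z} (hAS : A ⊆ S) {T U : Finset (Fin m)} (hUT : U ⊆ T) :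
    {ω : Fin m → Z | {i | ω i ∈ S} = ↑T ∧ {i | ω i ∈ A} = ↑U} =
      Set.univ.pi fun i => if i ∈ U then A else if i ∈ T then S \ A else Sᶜ := by
  ext ω
  simp only [Set.mem_ofPred_eq, Set.mem_univ_pi, Set.ext_iff, Finset.mem_coe]
  constructor
  · rintro ⟨hT, hU⟩ i
    split_ifs <;> grind
  · intro h
    constructor <;> intro i <;> have := h i <;> split_ifs at this <;> grind

variable [MeasurableSpace Z]

theorem measure_pi_setOf_samples_eq (μ : Measure Z) [SigmaFinite μ] {S A : Set Z} (hAS : A ⊆ S)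
    {T U : Finset (Fin m)} (hUT : U ⊆ T) :
    Measure.pi (fun _ : Fin m => μ) {ω | {i | ω i ∈ S} = ↑T ∧ {i | ω i ∈ A} = ↑U} =
      μ A ^ #U * μ (S \ A) ^ (#T - #U) * μ Sᶜ ^ (m - #T) := by
  have outside : ∀ i ∈ univ \ T, μ (if i ∈ U then A else if i ∈ T then S \ A else Sᶜ)
      = μ Sᶜ := fun i hi => by
    have hiT := (mem_sdiff.1 hi).2
    rw [if_neg fun hiU => hiT (hUT hiU), if_neg hiT]
  have between : ∀ i ∈ T \ U, μ (if i ∈ U then A else if i ∈ T then S \ A else Sᶜ)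
      = μ (S \ A) := fun i hi => by
    rw [if_neg (mem_sdiff.1 hi).2, if_pos (mem_sdiff.1 hi).1]
  have inside : ∀ i ∈ U, μ (if i ∈ U then A else if i ∈ T then S \ A else Sᶜ) = μ A :=
    fun i hi => by rw [if_pos hi]
  rw [setOf_samples_eq_pi hAS hUT, Measure.pi_pi, ← prod_sdiff (subset_univ T),
    ← prod_sdiff hUT, prod_congr rfl outside, prod_congr rfl between,
    prod_congr rfl inside, prod_const, prod_const, prod_const,
    card_sdiff_of_subset (subset_univ T), card_sdiff_of_subset hUT,
    card_univ, Fintype.card_fin]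
  ring

theorem measure_pi_counts_le (μ : Measure Z) [SigmaFinite μ] {S A : Set Z} (hAS : A ⊆ S)
    (P : ℕ → ℕ → Prop) [DecidableRel P] :
    Measure.pi (fun _ : Fin m => μ) {ω | P {i | ω i ∈ S}.ncard {i | ω i ∈ A}.ncard} ≤
      ∑ T ∈ (univ : Finset (Fin m)).powerset, ∑ U ∈ T.powerset with P #T #U,
        μ A ^ #U * μ (S \ A) ^ (#T - #U) * μ Sᶜ ^ (m - #T) := by
  classical
  have hcover : {ω : Fin m → Z | P {i | ω i ∈ S}.ncard {i | ω i ∈ A}.ncard} ⊆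
      ⋃ T ∈ (univ : Finset (Fin m)).powerset, ⋃ U ∈ T.powerset.filter (P #T #·),
        {ω | {i | ω i ∈ S} = ↑T ∧ {i | ω i ∈ A} = ↑U} := by
    intro ω hω
    have hT : {i | ω i ∈ S} = ↑(univ.filter fun i => ω i ∈ S) := by ext; simp
    have hU : {i | ω i ∈ A} = ↑(univ.filter fun i => ω i ∈ A) := by ext; simp
    simp only [Set.mem_iUnion]
    refine ⟨_, mem_powerset.2 (subset_univ _), _, mem_filter.2 ⟨mem_powerset.2 ?_, ?_⟩, hT, hU⟩
    · exact monotone_filter_right _ fun _ _ hi => hAS hi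
    · rwa [Set.mem_ofPred_eq, hT, hU, Set.ncard_coe_finset, Set.ncard_coe_finset] at hω
  refine (measure_mono hcover).trans <| (measure_biUnion_finset_le _ _).trans <|
    sum_le_sum fun T _ => (measure_biUnion_finset_le _ _).trans_eq <| sum_congr rfl fun U hU => ?_
  exact measure_pi_setOf_samples_eq μ hAS (mem_powerset.1 (mem_filter.1 hU).1)

theorem measure_pi_binCDF_count_lt_le (μ : Measure Z) [IsProbabilityMeasure μ] {S A : Set Z}
    (hS : MeasurableSet S) (hA : MeasurableSet A) (hAS : A ⊆ S) {δ : ℝ} (hδ : 0 ≤ δ) (m : ℕ) :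
    Measure.pi (fun _ : Fin m => μ)
        {ω | binCDF {i | ω i ∈ S}.ncard (μ[A | S]).toReal {i | ω i ∈ A}.ncard < δ} ≤
      ENNReal.ofReal δ := by
  set p := (μ[A | S]).toReal
  set q := (μ S).toReal
  have hp0 : 0 ≤ p := ENNReal.toReal_nonneg
  have hp1 : p ≤ 1 := measureReal_le_one
  have hq0 : 0 ≤ q := ENNReal.toReal_nonneg
  have hq1 : q ≤ 1 := measureReal_le_one
  have hμA : μ A = ENNReal.ofReal (p * q) := by
    rw [ENNReal.ofReal_mul hp0, ENNReal.ofReal_toReal (measure_ne_top _ _),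
      ENNReal.ofReal_toReal (measure_ne_top μ S), cond_mul_eq_inter hS,
      Set.inter_eq_self_of_subset_right hAS]
  have hμSA : μ (S \ A) = ENNReal.ofReal ((1 - p) * q) := by
    rw [measure_sdiff hAS hA.nullMeasurableSet (measure_ne_top μ A), hμA,
      ← ENNReal.ofReal_toReal (measure_ne_top μ S), ← ENNReal.ofReal_sub _ (by positivity)]
    congr 1
    ring
  have hμSc : μ Sᶜ = ENNReal.ofReal (1 - q) := by
    rw [prob_compl_eq_one_sub hS, ENNReal.ofReal_sub _ hq0, ENNReal.ofReal_one,
      ENNReal.ofReal_toReal (measure_ne_top μ S)]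
  have h1p : 0 ≤ 1 - p := by linarith
  have h1q : 0 ≤ 1 - q := by linarith
  refine (measure_pi_counts_le μ hAS fun k j => binCDF k p j < δ).trans ?_
  have hreal := sum_powerset_filter_binCDF_lt_le (univ : Finset (Fin m)) hp0 hp1 hq0 hq1 hδ
  rw [card_univ, Fintype.card_fin] at hreal
  refine le_of_eq_of_le ?_ (ENNReal.ofReal_le_ofReal hreal)
  rw [ENNReal.ofReal_sum_of_nonneg fun T _ => sum_nonneg fun U _ => by positivity]
  refine sum_congr rfl fun T _ => ?_
  rw [ENNReal.ofReal_sum_of_nonneg fun U _ => by positivity]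
  refine sum_congr rfl fun U _ => ?_
  rw [hμA, hμSA, hμSc, ← ENNReal.ofReal_pow (by positivity : 0 ≤ p * q),
    ← ENNReal.ofReal_pow (by positivity : 0 ≤ (1 - p) * q), ← ENNReal.ofReal_pow h1q,
    ← ENNReal.ofReal_mul (by positivity), ← ENNReal.ofReal_mul (by positivity)]

end SampleCounts

theorem ENNReal.ofReal_one_sub_le_of_add_eq_one {a b : ℝ≥0∞} (h : a + b = 1) {α : ℝ}
    (hb : b.toReal ≤ α) : ENNReal.ofReal (1 - α) ≤ a := by
  have hb_top : b ≠ ⊤ := ne_top_of_le_ne_top ENNReal.one_ne_top (h ▸ le_add_self)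
  calc ENNReal.ofReal (1 - α) ≤ ENNReal.ofReal (1 - b.toReal) := by gcongr
    _ = 1 - b := by rw [ENNReal.ofReal_sub _ ENNReal.toReal_nonneg, ENNReal.ofReal_one,
        ENNReal.ofReal_toReal hb_top]
    _ = a := ENNReal.sub_eq_of_eq_add hb_top h.symm

theorem ofReal_one_sub_le_prob_compl {Ω : Type*} [MeasurableSpace Ω] {ν : Measure Ω}
    [IsProbabilityMeasure ν] {s : Set Ω} {δ : ℝ} (hδ : 0 ≤ δ) (hs : ν s ≤ ENNReal.ofReal δ) :
    ENNReal.ofReal (1 - δ) ≤ ν sᶜ := by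
  have hcover : 1 ≤ ν sᶜ + ν s := by
    simpa [measure_univ, Set.compl_union_self] using measure_union_le (μ := ν) sᶜ s
  calc ENNReal.ofReal (1 - δ) = 1 - ENNReal.ofReal δ := by
        rw [ENNReal.ofReal_sub _ hδ, ENNReal.ofReal_one]
    _ ≤ 1 - ν s := tsub_le_tsub_left hs 1
    _ ≤ ν sᶜ := tsub_le_iff_right.2 hcover

theorem exists_measurableSet_subset_diff_cond_add_eq_one {Ω : Type*} [MeasurableSpace Ω]
    (μ : Measure Ω) [IsFiniteMeasure μ] {S : Set Ω} (hS : MeasurableSet S) (hμS : μ S ≠ 0)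
    (t : Set Ω) : ∃ A, MeasurableSet A ∧ A ⊆ S \ t ∧ μ[t | S] + μ[A | S] = 1 := by
  have := cond_isProbabilityMeasure (s := S) hμS
  have hH := measurableSet_toMeasurable μ[|S] t
  refine ⟨S \ toMeasurable μ[|S] t, hS.diff hH,
    Set.sdiff_subset_sdiff_right (subset_toMeasurable _ _), ?_⟩
  rw [Set.sdiff_eq, cond_inter_self hS, ← measure_toMeasurable t, prob_add_prob_compl hH]

section Calibration

variable {X Y : Type*} (f : X → Y) (C : X → ℝ) {m : ℕ} (ω : Fin m → X × Y) (lam : ℝ)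

theorem natCeil_nSel_mul_Rhat :
    ⌈(nSel C m ω lam : ℝ) * Rhat f C m ω lam⌉₊ =
      {i | lam ≤ C (ω i).1 ∧ f (ω i).1 ≠ (ω i).2}.ncard := by
  rcases (nSel C m ω lam).eq_zero_or_pos with h | h
  · have : {i | lam ≤ C (ω i).1 ∧ f (ω i).1 ≠ (ω i).2}.ncard ≤ nSel C m ω lam :=
      Set.ncard_le_ncard (fun _ hi => hi.1) (Set.toFinite _)
    rw [h] at this ⊢
    simp only [Nat.cast_zero, zero_mul, Nat.ceil_zero]
    omega
  · rw [Rhat, mul_div_cancel₀ _ (by positivity), Nat.ceil_natCast]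

theorem le_RhatPlus {δ r : ℝ} (hr0 : 0 ≤ r) (hr1 : r ≤ 1) {A : Set (X × Y)}
    (hA : A ⊆ {p | lam ≤ C p.1 ∧ f p.1 ≠ p.2})
    (h : δ ≤ binCDF (nSel C m ω lam) r {i | ω i ∈ A}.ncard) : r ≤ RhatPlus f C δ m ω lam := by
  refine le_csSup ⟨1, fun _ hR => hR.1.2⟩ ⟨⟨hr0, hr1⟩, h.trans (binCDF_monotone _ hr0 hr1 ?_)⟩
  rw [natCeil_nSel_mul_Rhat]
  exact Set.ncard_le_ncard (fun _ hi => hA hi) (Set.toFinite _)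

end Calibration

theorem stmt3_general {X Y : Type*} [MeasurableSpace X] [MeasurableSpace Y]
    (D : Measure (X × Y)) [IsProbabilityMeasure D]
    (f : X → Y) (C : X → ℝ) (hC : Measurable C)
    (δ α : ℝ) (hδ : δ ∈ Set.Ioo (0 : ℝ) 1)
    (Λ : Finset ℝ) (hpos : ∀ lam ∈ Λ, 0 < D {p : X × Y | lam ≤ C p.1})
    (m : ℕ) :
    ENNReal.ofReal (1 - δ) ≤
      (Measure.pi fun _ : Fin m => D)
        {ω : Fin m → X × Y |
          ∀ lamhat : ℝ,
            IsLeast {lam | lam ∈ Λ ∧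
                ∀ lam' ∈ Λ, lam ≤ lam' → RhatPlus f C δ m ω lam' ≤ α} lamhat →
            ENNReal.ofReal (1 - α) ≤
              D[|{p : X × Y | lamhat ≤ C p.1}] {p : X × Y | f p.1 = p.2}} := by
  set sel : ℝ → Set (X × Y) := fun lam => {p | lam ≤ C p.1}
  have hsel (lam : ℝ) : MeasurableSet (sel lam) :=
    measurableSet_le measurable_const (hC.comp measurable_fst)
  set agree := {p : X × Y | f p.1 = p.2}
  set bad := Λ.filter fun lam => D[agree | sel lam] < ENNReal.ofReal (1 - α)
  rcases bad.eq_empty_or_nonempty with hbad | hbad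
  · have hall : ∀ lamhat ∈ Λ, ENNReal.ofReal (1 - α) ≤ D[agree | sel lamhat] :=
      fun lamhat hlam => not_lt.1 fun h =>
        eq_empty_iff_forall_notMem.1 hbad lamhat (mem_filter.2 ⟨hlam, h⟩)
    exact (ENNReal.ofReal_le_one.2 (by linarith [hδ.1])).trans <|
      measure_univ.symm.trans_le <| measure_mono fun _ _ lamhat hL => hall lamhat hL.1.1
  set lamS := bad.max' hbad
  obtain ⟨hlamSΛ, hlamS⟩ := mem_filter.1 (bad.max'_mem hbad)
  -- `agree` need not be measurable; counting the points of its measurable substitute `A` only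
  -- undercounts the disagreements, which is harmless since `binCDF` is monotone.
  obtain ⟨A, hAm, hAsub, hA⟩ := exists_measurableSet_subset_diff_cond_add_eq_one D (hsel lamS)
    (hpos lamS hlamSΛ).ne' agree
  refine (ofReal_one_sub_le_prob_compl hδ.1.le (measure_pi_binCDF_count_lt_le D (hsel lamS) hAm
    (hAsub.trans Set.sdiff_subset) hδ.1.le m)).trans (measure_mono fun ω hω lamhat hL => ?_)
  by_contra hlow
  have hle : lamhat ≤ lamS := bad.le_max' _ (mem_filter.2 ⟨hL.1.1, not_le.1 hlow⟩)
  have hrisk : (D[A | sel lamS]).toReal ≤ RhatPlus f C δ m ω lamS :=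
    le_RhatPlus f C ω lamS ENNReal.toReal_nonneg measureReal_le_one hAsub (not_lt.1 hω)
  exact (ENNReal.ofReal_one_sub_le_of_add_eq_one hA
    (hrisk.trans (hL.1.2 lamS hlamSΛ hle))).not_gt hlamS

/-- Theorem 2.1 (human-agreement guarantee of fixed-sequence testing): with
probability at least `1 - δ` over the calibration sample, either no threshold in
the grid `Λ` is selected, or the selected threshold `λ̂` (the least grid point such
that all tests at larger grid points pass) satisfies
`D(f(x) = y | C(x) ≥ λ̂) ≥ 1 - α`. -/
theorem stmt3 {X Y : Type*} [MeasurableSpace X] [MeasurableSpace Y]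
    (D : Measure (X × Y)) [IsProbabilityMeasure D]
    (f : X → Y) (hf : Measurable f) (C : X → ℝ) (hC : Measurable C)
    (δ α : ℝ) (hδ : δ ∈ Set.Ioo (0 : ℝ) 1) (hα : α ∈ Set.Ioo (0 : ℝ) 1)
    (Λ : Finset ℝ) (hpos : ∀ lam ∈ Λ, 0 < D {p : X × Y | lam ≤ C p.1})
    (m : ℕ) (hm : 0 < m) :
    ENNReal.ofReal (1 - δ) ≤
      (Measure.pi fun _ : Fin m => D)
        {ω : Fin m → X × Y |
          ∀ lamhat : ℝ,
            IsLeast {lam | lam ∈ Λ ∧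
                ∀ lam' ∈ Λ, lam ≤ lam' → RhatPlus f C δ m ω lam' ≤ α} lamhat →
            ENNReal.ofReal (1 - α) ≤
              D[|{p : X × Y | lamhat ≤ C p.1}] {p : X × Y | f p.1 = p.2}} :=
  stmt3_general D f C hC δ α hδ Λ hpos m
end

section
/- Let q and p be probability measures on a measurable space Ω with q absolutely continuous with respect to p and KL(q‖p) < ∞. Let S ⊆ Ω be measurable with z := q(S) satisfying 1/2 ≤ z < 1, and define the conditional measure q̃(A) = q(A ∩ S)/z. Then KL(q̃‖p) ≤ 2 ( KL(q‖p) + 1 ). -/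
open MeasureTheory ProbabilityTheory
open scoped ENNReal NNReal

/- Kullback–Leibler divergence (natural log), `∞` when `q` is not absolutely
continuous w.r.t. `p` or when the log-density is not integrable. -/
open Classical in
noncomputable def KL {Ω : Type*} [MeasurableSpace Ω] (q p : Measure Ω) : ℝ≥0∞ :=
  if q ≪ p ∧ Integrable (fun ω => Real.log (q.rnDeriv p ω).toReal) q then
    ENNReal.ofReal (∫ ω, Real.log (q.rnDeriv p ω).toReal ∂q)
  else ⊤

/-! Splitting `∫ log (dq/dp) dq` over `S` and `Sᶜ` gives, with `z = q S`,
`KL(q‖p) = z · KL(q̃‖p) + z log z + ∫_{Sᶜ} log (dq/dp) dq`, and the log-sum inequality bounds the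
last integral below by `(1 - z) log (1 - z)`. Hence `z · KL(q̃‖p) ≤ KL(q‖p) + H(z)` with `H` the
binary entropy, and `H(z) ≤ log 2 < 1`, `z ≥ 1/2` give the bound. -/

open Real Set InformationTheory

section KL

variable {Ω : Type*} [MeasurableSpace Ω] {q p : Measure Ω}

lemma KL_ne_top_iff : KL q p ≠ ⊤ ↔ q ≪ p ∧ Integrable (llr q p) q := by
  unfold KL
  split_ifs with h
  · exact iff_of_true ENNReal.ofReal_ne_top h
  · exact iff_of_false (not_not.2 rfl) h

lemma KL_of_ac_of_integrable (hqp : q ≪ p) (hint : Integrable (llr q p) q) :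
    KL q p = ENNReal.ofReal (∫ x, llr q p x ∂q) :=
  if_pos ⟨hqp, hint⟩

end KL

namespace MeasureTheory

variable {α : Type*} [MeasurableSpace α] {μ ν : Measure α} {s : Set α}

lemma llr_restrict_ae_eq [μ.HaveLebesgueDecomposition ν] [SigmaFinite ν] (hμν : μ ≪ ν)
    (hs : MeasurableSet s) : llr (μ.restrict s) ν =ᵐ[μ.restrict s] llr μ ν := by
  filter_upwards [(Measure.restrict_le_self.absolutelyContinuous.trans hμν).ae_le
      (Measure.rnDeriv_restrict μ ν hs), ae_restrict_mem hs] with x hx hxs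
  simp only [llr_def, hx, indicator_of_mem hxs]

lemma mul_log_le_setIntegral_llr [IsFiniteMeasure μ] [IsFiniteMeasure ν] (hμν : μ ≪ ν)
    (hint : Integrable (llr μ ν) μ) (hs : MeasurableSet s) :
    μ.real s * log (μ.real s / ν.real univ) ≤ ∫ x in s, llr μ ν x ∂μ := by
  have hμν_s : μ.restrict s ≪ ν := Measure.restrict_le_self.absolutelyContinuous.trans hμν
  have hllr := llr_restrict_ae_eq hμν hs
  have h := mul_log_le_toReal_klDiv hμν_s ((hint.restrict).congr hllr.symm)
  rw [toReal_klDiv hμν_s ((hint.restrict).congr hllr.symm), integral_congr_ae hllr,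
    measureReal_restrict_apply_univ] at h
  linarith

lemma llr_cond_ae_eq [IsFiniteMeasure μ] [SigmaFinite ν] (hμν : μ ≪ ν) (hs : MeasurableSet s)
    (hμs : μ s ≠ 0) :
    llr μ[|s] ν =ᵐ[μ[|s]] fun x ↦ llr μ ν x - log (μ.real s) := by
  have hμν_s : μ.restrict s ≪ ν := Measure.restrict_le_self.absolutelyContinuous.trans hμν
  have h := llr_smul_left hμν_s (μ s)⁻¹ (by simp) (by simpa)
  refine Measure.ae_smul_measure ?_ _
  filter_upwards [h, llr_restrict_ae_eq hμν hs] with x hx hx'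
  rw [ProbabilityTheory.cond, hx, hx', ENNReal.toReal_inv, log_inv, measureReal_def]
  ring

lemma Integrable.cond {f : α → ℝ} (hf : Integrable f μ) (hμs : μ s ≠ 0) : Integrable f μ[|s] :=
  hf.restrict.smul_measure (ENNReal.inv_ne_top.2 hμs)

lemma integrable_llr_cond [IsFiniteMeasure μ] [SigmaFinite ν] (hμν : μ ≪ ν)
    (hint : Integrable (llr μ ν) μ) (hs : MeasurableSet s) (hμs : μ s ≠ 0) :
    Integrable (llr μ[|s] ν) μ[|s] :=
  ((hint.cond hμs).sub (integrable_const _)).congr (llr_cond_ae_eq hμν hs hμs).symm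

lemma integral_llr_cond [IsFiniteMeasure μ] [SigmaFinite ν] (hμν : μ ≪ ν)
    (hint : Integrable (llr μ ν) μ) (hs : MeasurableSet s) (hμs : μ s ≠ 0) :
    ∫ x, llr μ[|s] ν x ∂μ[|s] = (μ.real s)⁻¹ * ∫ x in s, llr μ ν x ∂μ - log (μ.real s) := by
  have : IsProbabilityMeasure μ[|s] := cond_isProbabilityMeasure hμs
  rw [integral_congr_ae (llr_cond_ae_eq hμν hs hμs),
    integral_sub (hint.cond hμs) (integrable_const _), integral_const, probReal_univ, one_smul,
    ProbabilityTheory.cond, integral_smul_measure, ENNReal.toReal_inv, smul_eq_mul,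
    measureReal_def]

lemma mul_integral_llr_cond_le_add_binEntropy [IsProbabilityMeasure μ] [IsProbabilityMeasure ν]
    (hμν : μ ≪ ν) (hint : Integrable (llr μ ν) μ) (hs : MeasurableSet s) (hμs : μ s ≠ 0) :
    μ.real s * ∫ x, llr μ[|s] ν x ∂μ[|s] ≤ ∫ x, llr μ ν x ∂μ + binEntropy (μ.real s) := by
  have hμs' : μ.real s ≠ 0 := (measureReal_ne_zero_iff).2 hμs
  have h_compl : (1 - μ.real s) * log (1 - μ.real s) ≤ ∫ x in sᶜ, llr μ ν x ∂μ := by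
    simpa [probReal_compl_eq_one_sub hs] using mul_log_le_setIntegral_llr hμν hint hs.compl
  rw [integral_llr_cond hμν hint hs hμs, ← integral_add_compl hs hint, binEntropy, log_inv,
    log_inv, mul_sub, ← mul_assoc, mul_inv_cancel₀ hμs', one_mul]
  linarith

end MeasureTheory

theorem stmt9_general {Ω : Type*} [MeasurableSpace Ω] (q p : Measure Ω)
    [IsProbabilityMeasure q] [IsProbabilityMeasure p]
    (hfin : KL q p ≠ ⊤)
    (S : Set Ω) (hS : MeasurableSet S)
    (hz0 : 1 / 2 ≤ q S) :
    KL (q[|S]) p ≤ 2 * (KL q p + 1) := by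
  obtain ⟨hqp, hint⟩ := KL_ne_top_iff.1 hfin
  have hqS : q S ≠ 0 := (lt_of_lt_of_le (by norm_num) hz0).ne'
  have hz : 1 / 2 ≤ q.real S := by
    simpa [measureReal_def] using ENNReal.toReal_mono (measure_ne_top q S) hz0
  have hL : 0 ≤ ∫ x, llr q p x ∂q := by
    simpa using mul_log_le_setIntegral_llr hqp hint MeasurableSet.univ
  have hK := mul_integral_llr_cond_le_add_binEntropy hqp hint hS hqS
  have hlog_two : log 2 < 1 := log_two_lt_d9.trans (by norm_num)
  have hH : binEntropy (q.real S) < 1 := binEntropy_le_log_two.trans_lt hlog_two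
  rw [KL_of_ac_of_integrable (cond_absolutelyContinuous.trans hqp)
    (integrable_llr_cond hqp hint hS hqS), KL_of_ac_of_integrable hqp hint]
  calc ENNReal.ofReal (∫ x, llr q[|S] p x ∂q[|S])
      ≤ ENNReal.ofReal (2 * (∫ x, llr q p x ∂q + 1)) :=
        ENNReal.ofReal_le_ofReal (by nlinarith)
    _ = 2 * (ENNReal.ofReal (∫ x, llr q p x ∂q) + 1) := by
        rw [ENNReal.ofReal_mul zero_le_two, ENNReal.ofReal_add hL zero_le_one]
        simp

/-- b4-step bound: if `z = q(S) ∈ [1/2, 1)` then the conditional measure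
`q̃ = q[|S]` satisfies `KL(q̃‖p) ≤ 2(KL(q‖p) + 1)`. -/
theorem stmt9 {Ω : Type*} [MeasurableSpace Ω] (q p : Measure Ω)
    [IsProbabilityMeasure q] [IsProbabilityMeasure p]
    (habs : q ≪ p) (hfin : KL q p ≠ ⊤)
    (S : Set Ω) (hS : MeasurableSet S)
    (hz0 : 1 / 2 ≤ q S) (hz1 : q S < 1) :
    KL (q[|S]) p ≤ 2 * (KL q p + 1) :=
  stmt9_general q p hfin S hS hz0
end

section
/- Let n ≥ 1 and let f_W be an n-layer ReLU network with weight matrices W_1, …, W_n, each with nonzero spectral norm. Let U_1, …, U_n be perturbation matrices of matching dimensions satisfying ‖U_l‖₂ ≤ (1/n)‖W_l‖₂ for every l. Then for every input x, ‖ f_{W+U}(x) − f_W(x) ‖₂ ≤ e · ‖x‖₂ · ( ∏_{l=1}^n ‖W_l‖₂ ) · Σ_{l=1}^n ‖U_l‖₂ / ‖W_l‖₂, where f_{W+U} denotes the network with weight matrices W_1 + U_1, …, W_n + U_n. -/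
/-!
Let `Δ_k` be the distance between the outputs of the first `k` layers of the perturbed and of the
original network. ReLU is 1-Lipschitz and fixes `0`, so
`Δ_{k+1} ≤ ‖W_k‖ Δ_k + ‖U_k‖ ‖x‖ ∏_{l<k} ‖W_l + U_l‖`, and `‖W_l + U_l‖ ≤ (1 + 1/n) ‖W_l‖`.
Induction gives `Δ_k ≤ (1 + 1/n)^k ‖x‖ (∏_{l<k} ‖W_l‖) ∑_{l<k} ‖U_l‖/‖W_l‖`, and
`(1 + 1/n)^n ≤ e`. The norm inequalities come from identifying `specNorm` with Mathlib's `L²`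
operator norm of matrices.
-/

open scoped ENNReal NNReal

/-- Euclidean norm of a vector. -/
noncomputable def vnorm {k : ℕ} (v : Fin k → ℝ) : ℝ := Real.sqrt (∑ i, v i ^ 2)

/-- Spectral norm (largest singular value) of a real matrix. -/
noncomputable def specNorm {a b : ℕ} (W : Matrix (Fin a) (Fin b) ℝ) : ℝ :=
  sSup ((fun x => vnorm (W.mulVec x)) '' {x | vnorm x ≤ 1})

/-- `net dims W n x = W_n φ(W_{n-1} φ(⋯ φ(W_1 x)⋯))` : an `n`-layer ReLU network
(weights `W l : dims (l+1) × dims l`, no activation after the last layer,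
none before the first). -/
noncomputable def net (dims : ℕ → ℕ)
    (W : ∀ l, Matrix (Fin (dims (l + 1))) (Fin (dims l)) ℝ) :
    ∀ n, (Fin (dims 0) → ℝ) → (Fin (dims n) → ℝ)
  | 0 => fun x => x
  | 1 => fun x => (W 0).mulVec x
  | (n + 2) => fun x => (W (n + 1)).mulVec (fun i => max (net dims W (n + 1) x i) 0)

open Matrix
open scoped Matrix.Norms.L2Operator

lemma vnorm_eq_norm {k : ℕ} (v : Fin k → ℝ) : vnorm v = ‖WithLp.toLp 2 v‖ := by
  simp [vnorm, EuclideanSpace.norm_eq, sq_abs]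

lemma vnorm_nonneg {k : ℕ} (v : Fin k → ℝ) : 0 ≤ vnorm v := Real.sqrt_nonneg _

lemma vnorm_add_le {k : ℕ} (u v : Fin k → ℝ) : vnorm (u + v) ≤ vnorm u + vnorm v := by
  simpa only [vnorm_eq_norm, WithLp.toLp_add] using norm_add_le _ _

lemma specNorm_eq_l2_opNorm {a b : ℕ} (W : Matrix (Fin a) (Fin b) ℝ) : specNorm W = ‖W‖ := by
  rw [Matrix.l2_opNorm_def, ← ContinuousLinearMap.sSup_unitClosedBall_eq_norm, specNorm]
  have hball : {x : Fin b → ℝ | vnorm x ≤ 1} =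
      WithLp.ofLp '' Metric.closedBall (0 : EuclideanSpace ℝ (Fin b)) 1 := by
    ext x
    exact ⟨fun hx => ⟨WithLp.toLp 2 x, by simpa [vnorm_eq_norm] using hx, rfl⟩,
      by rintro ⟨y, hy, rfl⟩; simpa [vnorm_eq_norm] using hy⟩
  rw [hball, Set.image_image]
  simp only [vnorm_eq_norm]
  rfl

lemma specNorm_nonneg {a b : ℕ} (W : Matrix (Fin a) (Fin b) ℝ) : 0 ≤ specNorm W :=
  specNorm_eq_l2_opNorm W ▸ norm_nonneg W

lemma specNorm_add_le {a b : ℕ} (W U : Matrix (Fin a) (Fin b) ℝ) :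
    specNorm (W + U) ≤ specNorm W + specNorm U := by
  simpa only [specNorm_eq_l2_opNorm] using norm_add_le W U

lemma vnorm_mulVec_le {a b : ℕ} (W : Matrix (Fin a) (Fin b) ℝ) (x : Fin b → ℝ) :
    vnorm (W *ᵥ x) ≤ specNorm W * vnorm x := by
  rw [specNorm_eq_l2_opNorm, vnorm_eq_norm, vnorm_eq_norm]
  exact W.l2_opNorm_mulVec (WithLp.toLp 2 x)

lemma vnorm_add_mulVec_sub_mulVec_le {a b : ℕ} (W U : Matrix (Fin a) (Fin b) ℝ)
    (x y : Fin b → ℝ) :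
    vnorm ((W + U) *ᵥ x - W *ᵥ y) ≤ specNorm W * vnorm (x - y) + specNorm U * vnorm x := by
  have hsplit : (W + U) *ᵥ x - W *ᵥ y = W *ᵥ (x - y) + U *ᵥ x := by
    rw [add_mulVec, mulVec_sub]; abel
  rw [hsplit]
  exact (vnorm_add_le _ _).trans (add_le_add (vnorm_mulVec_le W _) (vnorm_mulVec_le U x))

def relu {k : ℕ} (v : Fin k → ℝ) : Fin k → ℝ := fun i => max (v i) 0

lemma vnorm_relu_sub_relu_le {k : ℕ} (v w : Fin k → ℝ) :
    vnorm (relu v - relu w) ≤ vnorm (v - w) := by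
  refine Real.sqrt_le_sqrt (Finset.sum_le_sum fun i _ => ?_)
  simpa only [Pi.sub_apply, relu, sq_abs] using
    pow_le_pow_left₀ (abs_nonneg _) (abs_max_sub_max_le_abs (v i) (w i) 0) 2

lemma vnorm_relu_le {k : ℕ} (v : Fin k → ℝ) : vnorm (relu v) ≤ vnorm v := by
  have hrelu0 : relu (0 : Fin k → ℝ) = 0 := funext fun _ => max_self 0
  simpa only [hrelu0, sub_zero] using vnorm_relu_sub_relu_le v 0

section Network

variable {dims : ℕ → ℕ}

noncomputable def layerInput (W : ∀ l, Matrix (Fin (dims (l + 1))) (Fin (dims l)) ℝ)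
    (x : Fin (dims 0) → ℝ) : ∀ k, Fin (dims k) → ℝ
  | 0 => x
  | k + 1 => relu (net dims W (k + 1) x)

variable (W U : ∀ l, Matrix (Fin (dims (l + 1))) (Fin (dims l)) ℝ) (x : Fin (dims 0) → ℝ)

lemma net_succ (k : ℕ) : net dims W (k + 1) x = W k *ᵥ layerInput W x k := by
  cases k <;> rfl

lemma vnorm_layerInput_le (k : ℕ) : vnorm (layerInput W x k) ≤ vnorm (net dims W k x) := by
  cases k with
  | zero => exact le_rfl
  | succ k => exact vnorm_relu_le _

lemma vnorm_layerInput_sub_le (k : ℕ) :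
    vnorm (layerInput W x k - layerInput U x k) ≤ vnorm (net dims W k x - net dims U k x) := by
  cases k with
  | zero => simp [layerInput, net]
  | succ k => exact vnorm_relu_sub_relu_le _ _

lemma vnorm_net_le (k : ℕ) :
    vnorm (net dims W k x) ≤ vnorm x * ∏ l ∈ Finset.range k, specNorm (W l) := by
  induction k with
  | zero => simp [net]
  | succ k ih =>
    calc vnorm (net dims W (k + 1) x)
        ≤ specNorm (W k) * vnorm (layerInput W x k) := by
          rw [net_succ]; exact vnorm_mulVec_le _ _
      _ ≤ specNorm (W k) * (vnorm x * ∏ l ∈ Finset.range k, specNorm (W l)) :=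
          mul_le_mul_of_nonneg_left ((vnorm_layerInput_le W x k).trans ih) (specNorm_nonneg _)
      _ = vnorm x * ∏ l ∈ Finset.range (k + 1), specNorm (W l) := by
          rw [Finset.prod_range_succ]; ring

variable {W U} {ε : ℝ} {n : ℕ}

lemma prod_specNorm_add_le (hU : ∀ l < n, specNorm (U l) ≤ ε * specNorm (W l)) {k : ℕ}
    (hk : k ≤ n) :
    ∏ l ∈ Finset.range k, specNorm (W l + U l) ≤
      (1 + ε) ^ k * ∏ l ∈ Finset.range k, specNorm (W l) := by
  calc ∏ l ∈ Finset.range k, specNorm (W l + U l)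
      ≤ ∏ l ∈ Finset.range k, (1 + ε) * specNorm (W l) := by
        refine Finset.prod_le_prod (fun l _ => specNorm_nonneg _) fun l hl => ?_
        have := hU l ((Finset.mem_range.mp hl).trans_le hk)
        linarith [specNorm_add_le (W l) (U l)]
    _ = (1 + ε) ^ k * ∏ l ∈ Finset.range k, specNorm (W l) := by
        rw [Finset.prod_mul_distrib, Finset.prod_const, Finset.card_range]

-- `specNorm (W l) = 0` forces `specNorm (U l) = 0`, so the junk quotient `0 / 0 = 0` is harmless.
lemma mul_specNorm_div_specNorm (hU : ∀ l < n, specNorm (U l) ≤ ε * specNorm (W l)) {l : ℕ}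
    (hl : l < n) :
    specNorm (W l) * (specNorm (U l) / specNorm (W l)) = specNorm (U l) := by
  refine mul_div_cancel_of_imp' fun h => le_antisymm ?_ (specNorm_nonneg _)
  simpa [h] using hU l hl

lemma vnorm_net_add_le (hU : ∀ l < n, specNorm (U l) ≤ ε * specNorm (W l)) {k : ℕ}
    (hk : k ≤ n) :
    vnorm (net dims (fun l => W l + U l) k x) ≤
      (1 + ε) ^ k * vnorm x * ∏ l ∈ Finset.range k, specNorm (W l) :=
  calc vnorm (net dims (fun l => W l + U l) k x)
      ≤ vnorm x * ∏ l ∈ Finset.range k, specNorm (W l + U l) := vnorm_net_le _ x k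
    _ ≤ vnorm x * ((1 + ε) ^ k * ∏ l ∈ Finset.range k, specNorm (W l)) :=
        mul_le_mul_of_nonneg_left (prod_specNorm_add_le hU hk) (vnorm_nonneg x)
    _ = (1 + ε) ^ k * vnorm x * ∏ l ∈ Finset.range k, specNorm (W l) := by ring

lemma vnorm_net_add_sub_net_le (hU : ∀ l < n, specNorm (U l) ≤ ε * specNorm (W l))
    (hε : 0 ≤ ε) {k : ℕ} (hk : k ≤ n) :
    vnorm (net dims (fun l => W l + U l) k x - net dims W k x) ≤
      (1 + ε) ^ k * vnorm x * (∏ l ∈ Finset.range k, specNorm (W l)) *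
        ∑ l ∈ Finset.range k, specNorm (U l) / specNorm (W l) := by
  induction k with
  | zero => simp [net, vnorm]
  | succ k ih =>
    have hkn : k < n := hk
    set P := ∏ l ∈ Finset.range k, specNorm (W l)
    set S := ∑ l ∈ Finset.range k, specNorm (U l) / specNorm (W l)
    have hP : 0 ≤ P := Finset.prod_nonneg fun l _ => specNorm_nonneg _
    have hS : 0 ≤ S :=
      Finset.sum_nonneg fun l _ => div_nonneg (specNorm_nonneg _) (specNorm_nonneg _)
    calc vnorm (net dims (fun l => W l + U l) (k + 1) x - net dims W (k + 1) x)
        ≤ specNorm (W k) * vnorm (layerInput (fun l => W l + U l) x k - layerInput W x k) +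
            specNorm (U k) * vnorm (layerInput (fun l => W l + U l) x k) := by
          rw [net_succ, net_succ]; exact vnorm_add_mulVec_sub_mulVec_le _ _ _ _
      _ ≤ specNorm (W k) * ((1 + ε) ^ k * vnorm x * P * S) +
            specNorm (U k) * ((1 + ε) ^ k * vnorm x * P) := by
          gcongr
          · exact specNorm_nonneg _
          · exact (vnorm_layerInput_sub_le _ _ x k).trans (ih hkn.le)
          · exact specNorm_nonneg _
          · exact (vnorm_layerInput_le _ x k).trans (vnorm_net_add_le x hU hkn.le)
      _ = (1 + ε) ^ k * vnorm x * (P * specNorm (W k)) *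
            (S + specNorm (U k) / specNorm (W k)) := by
          linear_combination (-((1 + ε) ^ k * vnorm x * P)) * mul_specNorm_div_specNorm hU hkn
      _ ≤ (1 + ε) ^ (k + 1) * vnorm x * (P * specNorm (W k)) *
            (S + specNorm (U k) / specNorm (W k)) := by
          have := vnorm_nonneg x
          have := specNorm_nonneg (W k)
          have := div_nonneg (specNorm_nonneg (U k)) (specNorm_nonneg (W k))
          gcongr
          · linarith
          · omega
      _ = _ := by rw [Finset.prod_range_succ, Finset.sum_range_succ]

end Network

theorem stmt10_general (n : ℕ) (dims : ℕ → ℕ)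
    (W U : ∀ l, Matrix (Fin (dims (l + 1))) (Fin (dims l)) ℝ)
    (hU : ∀ l, l < n → specNorm (U l) ≤ (1 / n : ℝ) * specNorm (W l)) :
    ∀ x : Fin (dims 0) → ℝ,
      vnorm (net dims (fun l => W l + U l) n x - net dims W n x) ≤
        Real.exp 1 * vnorm x * (∏ l ∈ Finset.range n, specNorm (W l)) *
          ∑ l ∈ Finset.range n, specNorm (U l) / specNorm (W l) := by
  intro x
  have hP : 0 ≤ ∏ l ∈ Finset.range n, specNorm (W l) :=
    Finset.prod_nonneg fun l _ => specNorm_nonneg _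
  have hS : 0 ≤ ∑ l ∈ Finset.range n, specNorm (U l) / specNorm (W l) :=
    Finset.sum_nonneg fun l _ => div_nonneg (specNorm_nonneg _) (specNorm_nonneg _)
  calc _ ≤ (1 + 1 / n) ^ n * vnorm x * (∏ l ∈ Finset.range n, specNorm (W l)) *
          ∑ l ∈ Finset.range n, specNorm (U l) / specNorm (W l) :=
        vnorm_net_add_sub_net_le x hU (by positivity) le_rfl
    _ ≤ _ := by
        gcongr
        · exact vnorm_nonneg x
        · simpa only [one_div] using Real.one_add_inv_pow_le_exp

/-- Lemma D.1 (perturbation bound of Neyshabur et al.): if each perturbation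
satisfies `‖U_l‖₂ ≤ (1/n)‖W_l‖₂`, then for every input `x`,
`‖f_{W+U}(x) − f_W(x)‖₂ ≤ e ‖x‖₂ (∏ ‖W_l‖₂) ∑ ‖U_l‖₂/‖W_l‖₂`. -/
theorem stmt10 (n : ℕ) (hn : 1 ≤ n) (dims : ℕ → ℕ)
    (W U : ∀ l, Matrix (Fin (dims (l + 1))) (Fin (dims l)) ℝ)
    (hW : ∀ l, l < n → specNorm (W l) ≠ 0)
    (hU : ∀ l, l < n → specNorm (U l) ≤ (1 / n : ℝ) * specNorm (W l)) :
    ∀ x : Fin (dims 0) → ℝ,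
      vnorm (net dims (fun l => W l + U l) n x - net dims W n x) ≤
        Real.exp 1 * vnorm x * (∏ l ∈ Finset.range n, specNorm (W l)) *
          ∑ l ∈ Finset.range n, specNorm (U l) / specNorm (W l) :=
  stmt10_general n dims W U hU
end
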